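/- If f : I → ℝ solves the restricted Cauchy equation f(x+x') = f(x)+f(x') for all x, x', x+x' ∈ I and f is not of the form f(x) = c·x for any c ∈ ℝ, then the graph of f is everywhere dense in I × ℝ. -/

import Mathlib

/-!
A solution of the Cauchy equation on an interval `I ∋ 0` extends to an additive map
`F : ℝ → ℝ`: extend it from a segment `[0, x₀] ⊆ I` by `F (x + x₀) = F x + F x₀`, and the
extension agrees with `f` on all of `I` because `f x = n f (x / n)`. The closure of the graph of
`F` is a closed additive subgroup of `ℝ²` stable under rational, hence real, scalings; if `F` is
not linear it is all of `ℝ²`. Since `I` lies in the closure of its interior, where `F = f`, the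
graph of `f` is dense in `I × ℝ`.
-/

open Set

def IsAdditiveOn (f : ℝ → ℝ) (I : Set ℝ) : Prop :=
  ∀ x ∈ I, ∀ y ∈ I, x + y ∈ I → f (x + y) = f x + f y

namespace IsAdditiveOn

variable {f g φ : ℝ → ℝ} {I : Set ℝ}

theorem map_zero (hf : IsAdditiveOn f I) (h0 : (0 : ℝ) ∈ I) : f 0 = 0 := by
  simpa using hf 0 h0 0 h0 (by simpa using h0)

theorem sub (hf : IsAdditiveOn f I) (hg : IsAdditiveOn g I) : IsAdditiveOn (f - g) I :=
  fun x hx y hy hxy => by simp only [Pi.sub_apply, hf x hx y hy hxy, hg x hx y hy hxy]; ring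

theorem map_nat_mul (hf : IsAdditiveOn f I) (hI : Convex ℝ I) (h0 : (0 : ℝ) ∈ I) (n : ℕ)
    {t : ℝ} (ht : t ∈ I) (hnt : n * t ∈ I) : f (n * t) = n * f t := by
  induction n with
  | zero => simpa using hf.map_zero h0
  | succ n ih =>
    have hn : (n : ℝ) * t ∈ I := by
      have hscale : (n : ℝ) * t = (n / (n + 1 : ℕ)) * ((n + 1 : ℕ) * t) := by field_simp
      rw [hscale]
      exact hI.smul_mem_of_zero_mem h0 hnt
        ⟨by positivity, div_le_one_of_le₀ (by simp) (by positivity)⟩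
    have hsplit : ((n + 1 : ℕ) : ℝ) * t = n * t + t := by push_cast; ring
    rw [hsplit] at hnt ⊢
    rw [hf _ hn _ ht hnt, ih hn]
    push_cast; ring

/-- Write `x = n y` with `|y| ≤ |x₀|`; then `y` or `y + x₀` lies on the segment from `0` to `x₀`. -/
theorem eq_zero_of_forall_Icc (hf : IsAdditiveOn f I) (hI : Convex ℝ I) (h0 : (0 : ℝ) ∈ I)
    {x₀ : ℝ} (hx₀I : x₀ ∈ I) (hx₀ : x₀ ≠ 0) (h : ∀ θ ∈ Icc (0 : ℝ) 1, f (θ * x₀) = 0)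
    {x : ℝ} (hx : x ∈ I) : f x = 0 := by
  have hx₀abs : 0 < |x₀| := abs_pos.2 hx₀
  obtain ⟨n, hn⟩ := exists_nat_gt (|x| / |x₀|)
  have hnpos : (0 : ℝ) < n := lt_of_le_of_lt (by positivity) hn
  set y := x / n
  have hyx : (n : ℝ) * y = x := mul_div_cancel₀ x hnpos.ne'
  have hy : y ∈ I := by
    rw [show y = (n : ℝ)⁻¹ * x from div_eq_inv_mul x n]
    exact hI.smul_mem_of_zero_mem h0 hx
      ⟨inv_nonneg.2 hnpos.le, inv_le_one_of_one_le₀ (Nat.one_le_cast.2 (Nat.cast_pos.1 hnpos))⟩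
  have hθ : |y / x₀| ≤ 1 := by
    rw [abs_div, div_le_one hx₀abs, abs_div, abs_of_pos hnpos, div_le_iff₀ hnpos]
    rw [div_lt_iff₀ hx₀abs] at hn
    linarith
  have hfy : f y = 0 := by
    rcases le_total 0 (y / x₀) with hpos | hneg
    · simpa [div_mul_cancel₀ y hx₀] using h (y / x₀) ⟨hpos, le_trans (le_abs_self _) hθ⟩
    · have hshift : (y / x₀ + 1) * x₀ = y + x₀ := by field_simp
      have hmem : y / x₀ + 1 ∈ Icc (0 : ℝ) 1 := ⟨by linarith [neg_abs_le (y / x₀)], by linarith⟩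
      have hyx₀ : y + x₀ ∈ I := by
        rw [← hshift]; exact hI.smul_mem_of_zero_mem h0 hx₀I hmem
      have := hf y hy x₀ hx₀I hyx₀
      rw [← hshift, h _ hmem, ← one_mul x₀, h 1 ⟨zero_le_one, le_rfl⟩] at this
      linarith
  rw [← hyx, hf.map_nat_mul hI h0 n hy (hyx ▸ hx), hfy, mul_zero]

noncomputable def extendUnitInterval (φ : ℝ → ℝ) (x : ℝ) : ℝ :=
  ⌊x⌋ * φ 1 + φ (Int.fract x)

theorem extendUnitInterval_intCast_add (hφ : IsAdditiveOn φ (Icc 0 1)) (m : ℤ) {s : ℝ}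
    (hs : s ∈ Icc (0 : ℝ) 1) : extendUnitInterval φ (m + s) = m * φ 1 + φ s := by
  rcases hs.2.lt_or_eq with hs1 | rfl
  · have hfl : ⌊s⌋ = 0 := Int.floor_eq_zero_iff.2 ⟨hs.1, hs1⟩
    simp [extendUnitInterval, Int.floor_intCast_add, Int.fract_intCast_add, hfl,
      Int.fract_eq_self.2 ⟨hs.1, hs1⟩]
  · rw [extendUnitInterval, ← Int.cast_one, ← Int.cast_add, Int.floor_intCast, Int.fract_intCast,
      hφ.map_zero ⟨le_rfl, zero_le_one⟩]
    push_cast; ring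

theorem extendUnitInterval_add (hφ : IsAdditiveOn φ (Icc 0 1)) (x y : ℝ) :
    extendUnitInterval φ (x + y) = extendUnitInterval φ x + extendUnitInterval φ y := by
  have ha := Int.fract_nonneg x
  have ha1 := Int.fract_lt_one x
  have hb := Int.fract_nonneg y
  have hb1 := Int.fract_lt_one y
  set a := Int.fract x
  set b := Int.fract y
  have hx : extendUnitInterval φ x = ⌊x⌋ * φ 1 + φ a := rfl
  have hy : extendUnitInterval φ y = ⌊y⌋ * φ 1 + φ b := rfl
  rw [hx, hy]
  rcases le_or_gt (a + b) 1 with hab | hab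
  · have hxy : x + y = ((⌊x⌋ + ⌊y⌋ : ℤ) : ℝ) + (a + b) := by
      push_cast; linarith [Int.floor_add_fract x, Int.floor_add_fract y]
    rw [hxy, extendUnitInterval_intCast_add hφ _ ⟨by positivity, hab⟩,
      hφ a ⟨ha, ha1.le⟩ b ⟨hb, hb1.le⟩ ⟨by positivity, hab⟩]
    push_cast; ring
  · have hxy : x + y = ((⌊x⌋ + ⌊y⌋ + 1 : ℤ) : ℝ) + (a + b - 1) := by
      push_cast; linarith [Int.floor_add_fract x, Int.floor_add_fract y]
    -- `a + b - 1` and `1 - b` add up to `a`, and `1 - b` and `b` to `1`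
    have h₁ := hφ (a + b - 1) ⟨by linarith, by linarith⟩ (1 - b) ⟨by linarith, by linarith⟩
      ⟨by linarith, by linarith⟩
    have h₂ := hφ (1 - b) ⟨by linarith, by linarith⟩ b ⟨hb, hb1.le⟩ ⟨by linarith, by linarith⟩
    rw [show a + b - 1 + (1 - b) = a by ring] at h₁
    rw [show 1 - b + b = 1 by ring] at h₂
    rw [hxy, extendUnitInterval_intCast_add hφ _ ⟨by linarith, by linarith⟩]
    push_cast; linarith

theorem exists_addMonoidHom_eqOn_Icc (hφ : IsAdditiveOn φ (Icc 0 1)) :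
    ∃ Φ : ℝ →+ ℝ, EqOn Φ φ (Icc 0 1) :=
  ⟨AddMonoidHom.mk' (extendUnitInterval φ) (extendUnitInterval_add hφ), fun s hs => by
    simpa using extendUnitInterval_intCast_add hφ 0 hs⟩

theorem exists_addMonoidHom_eqOn (hf : IsAdditiveOn f I) (hI : Convex ℝ I) (h0 : (0 : ℝ) ∈ I)
    (hnt : ∃ x ∈ I, x ≠ 0) : ∃ F : ℝ →+ ℝ, EqOn F f I := by
  obtain ⟨x₀, hx₀I, hx₀⟩ := hnt
  have hseg : ∀ θ ∈ Icc (0 : ℝ) 1, θ * x₀ ∈ I := fun θ hθ => hI.smul_mem_of_zero_mem h0 hx₀I hθ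
  have hφ : IsAdditiveOn (fun θ => f (θ * x₀)) (Icc 0 1) := fun s hs t ht hst => by
    simpa only [add_mul] using
      hf _ (hseg s hs) _ (hseg t ht) (by simpa only [add_mul] using hseg _ hst)
  obtain ⟨Φ, hΦ⟩ := exists_addMonoidHom_eqOn_Icc hφ
  refine ⟨Φ.comp (AddMonoidHom.mulRight x₀⁻¹), fun x hx => sub_eq_zero.1 ?_⟩
  have hF : IsAdditiveOn (Φ.comp (AddMonoidHom.mulRight x₀⁻¹)) I :=
    fun _ _ _ _ _ => map_add _ _ _
  refine (hF.sub hf).eq_zero_of_forall_Icc hI h0 hx₀I hx₀ (fun θ hθ => ?_) hx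
  simpa [mul_inv_cancel_right₀ hx₀] using sub_eq_zero.2 (hΦ hθ)

end IsAdditiveOn

namespace AddMonoidHom

theorem smul_mem_topologicalClosure_graph (F : ℝ →+ ℝ) {p : ℝ × ℝ}
    (hp : p ∈ F.graph.topologicalClosure) (r : ℝ) : r • p ∈ F.graph.topologicalClosure := by
  refine Rat.denseRange_cast.induction_on r (isClosed_closure.preimage (continuous_smul.comp
    (continuous_id.prodMk continuous_const))) fun q => ?_
  refine map_mem_closure (continuous_const_smul _) hp fun x hx => ?_
  simp only [SetLike.mem_coe, mem_graph, Prod.smul_fst, Prod.smul_snd] at hx ⊢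
  rw [map_ratCast_smul F ℝ ℝ, hx]

/-- The closure of the graph is a closed `ℚ`-subspace, hence an `ℝ`-subspace of `ℝ × ℝ`; if `F` is
not linear it contains two independent vectors `(1, F 1)` and `(x, F x)`. -/
theorem dense_graph (F : ℝ →+ ℝ) (hF : ¬ ∃ c : ℝ, ∀ x, F x = c * x) :
    Dense (F.graph : Set (ℝ × ℝ)) := by
  obtain ⟨x, hx⟩ : ∃ x, F x ≠ F 1 * x := not_forall.1 fun h => hF ⟨F 1, h⟩
  have hd : F x - F 1 * x ≠ 0 := sub_ne_zero.2 hx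
  intro ⟨a, b⟩
  set β := (b - F 1 * a) / (F x - F 1 * x)
  have hab : ((a, b) : ℝ × ℝ) = (a - β * x) • (1, F 1) + β • (x, F x) := by
    ext
    · simp
    · simp only [Prod.smul_mk, smul_eq_mul, mul_one, Prod.mk_add_mk, β]
      field_simp
      ring
  rw [hab]
  refine F.graph.topologicalClosure.add_mem (F.smul_mem_topologicalClosure_graph ?_ _)
    (F.smul_mem_topologicalClosure_graph ?_ _) <;>
  exact F.graph.le_topologicalClosure (mem_graph.2 rfl)

end AddMonoidHom

theorem Convex.subset_closure_interior_of_ne {I : Set ℝ} (hI : Convex ℝ I) {x y : ℝ} (hx : x ∈ I)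
    (hy : y ∈ I) (hxy : x ≠ y) : I ⊆ closure (interior I) := by
  have hIoo : Ioo (min x y) (max x y) ⊆ interior I :=
    interior_maximal (Ioo_subset_Icc_self.trans (hI.ordConnected.uIcc_subset hx hy)) isOpen_Ioo
  rw [hI.closure_interior_eq_closure_of_nonempty_interior
    ((nonempty_Ioo.2 (min_lt_max.2 hxy)).mono hIoo)]
  exact subset_closure

/-- If `f : I → ℝ` solves the restricted Cauchy equation and is not
of the form `f(x) = c·x`, then its graph is everywhere dense in `I × ℝ`. -/
theorem cauchy_interval_dense_graph (I : Set ℝ) (hI : I.OrdConnected)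
    (h0 : (0 : ℝ) ∈ I) (hnt : ∃ x ∈ I, x ≠ 0) (f : ℝ → ℝ)
    (hadd : ∀ x ∈ I, ∀ x' ∈ I, x + x' ∈ I → f (x + x') = f x + f x')
    (hnl : ¬ ∃ c : ℝ, ∀ x ∈ I, f x = c * x) :
    I ×ˢ (Set.univ : Set ℝ) ⊆ closure {p : ℝ × ℝ | p.1 ∈ I ∧ p.2 = f p.1} := by
  have hconv : Convex ℝ I := hI.convex
  obtain ⟨F, hFf⟩ := IsAdditiveOn.exists_addMonoidHom_eqOn hadd hconv h0 hnt
  have hdense : Dense (F.graph : Set (ℝ × ℝ)) :=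
    F.dense_graph fun ⟨c, hc⟩ => hnl ⟨c, fun x hx => hFf hx ▸ hc x⟩
  obtain ⟨x₀, hx₀I, hx₀⟩ := hnt
  have hopen : IsOpen (interior I ×ˢ (univ : Set ℝ)) := isOpen_interior.prod isOpen_univ
  calc I ×ˢ univ ⊆ closure (interior I ×ˢ univ) := by
        rw [closure_prod_eq, closure_univ]
        exact prod_mono (hconv.subset_closure_interior_of_ne hx₀I h0 hx₀) subset_rfl
    _ ⊆ closure (interior I ×ˢ univ ∩ F.graph) :=
        closure_minimal (hdense.open_subset_closure_inter hopen) isClosed_closure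
    _ ⊆ closure {p : ℝ × ℝ | p.1 ∈ I ∧ p.2 = f p.1} := by
        refine closure_mono ?_
        rintro p ⟨⟨hp, -⟩, hpF⟩
        refine ⟨interior_subset hp, ?_⟩
        rw [← AddMonoidHom.mem_graph.1 hpF, hFf (interior_subset hp)]
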